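/- For m ≥ 1 and n ≥ 0, E[(S_m)_n] = ∑_{k=0}^n s(n,k)·S(m+k,m)/C(m+k,m), where S_m is the sum of m independent uniform [0,1] random variables and (x)_n is the falling factorial. -/

import Mathlib

open MeasureTheory Finset

/-- Falling factorial `(θ)_n = θ(θ-1)⋯(θ-n+1)`. -/
noncomputable def fallFac (θ : ℝ) (n : ℕ) : ℝ := ∏ i ∈ Finset.range n, (θ - i)

/-- Signed Stirling numbers of the first kind. -/
noncomputable def stirlingFst (n k : ℕ) : ℝ := (descPochhammer ℝ n).coeff k

/-- Stirling numbers of the second kind. -/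
def stirlingSnd : ℕ → ℕ → ℕ
  | 0, 0 => 1
  | 0, _ + 1 => 0
  | _ + 1, 0 => 0
  | n + 1, k + 1 => (k + 1) * stirlingSnd n (k + 1) + stirlingSnd n k

/-!
Expanding `(θ)_n = ∑ₖ s(n,k) θᵏ` reduces the claim to the power moments
`A(m,k) = E[S_mᵏ] = S(m+k,m) / C(m+k,m)`. Write `S_{m+1} = U + S_m`. Integrating out `U` gives
`(k+1) A(m+1,k) = E[(1+S_m)^{k+1}] - A(m,k+1)`, and integrating `U (U+s)ᵏ` by parts gives
`(k+1) E[U S_{m+1}ᵏ] = E[(1+S_m)^{k+1}] - A(m+1,k+1)`; by exchangeability,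
`A(m+1,k+1) = (m+1) E[U S_{m+1}ᵏ]`. Hence
`(m+k+2) A(m+1,k+1) = (m+1) (A(m,k+1) + (k+1) A(m+1,k))`, which after multiplication by a binomial
coefficient is the recurrence `S(N+1,m+1) = (m+1) S(N,m+1) + S(N,m)`.
-/

lemma fallFac_eq_sum_stirlingFst (θ : ℝ) (n : ℕ) :
    fallFac θ n = ∑ k ∈ range (n + 1), stirlingFst n k * θ ^ k := by
  rw [fallFac, ← descPochhammer_eval_eq_prod_range,
    Polynomial.eval_eq_sum_range' (n := n + 1) (by rw [descPochhammer_natDegree]; omega)]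
  rfl

lemma stirlingSnd_eq_stirlingSecond : stirlingSnd = Nat.stirlingSecond := by
  funext n k
  induction n generalizing k with
  | zero => cases k <;> rfl
  | succ n ih => cases k <;> simp [stirlingSnd, Nat.stirlingSecond, ih]

section Pi

variable {α : Type*} [MeasurableSpace α] (ν : Measure α) [SigmaFinite ν]

lemma integral_pi_comp_perm {ι : Type*} [Fintype ι] (σ : Equiv.Perm ι)
    (g : (ι → α) → ℝ) :
    ∫ x, g (x ∘ σ) ∂Measure.pi (fun _ => ν) = ∫ x, g x ∂Measure.pi (fun _ => ν) := by
  refine Eq.trans (integral_congr_ae (ae_of_all _ fun x => congrArg g (funext fun i => ?_)))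
    ((measurePreserving_piCongrLeft (fun _ : ι => ν) σ.symm).integral_comp' g)
  simp [MeasurableEquiv.piCongrLeft, Equiv.piCongrLeft]

lemma integral_pi_fin_succ {m : ℕ} {g : (Fin (m + 1) → α) → ℝ}
    (hg : Integrable g (Measure.pi fun _ => ν)) :
    ∫ x, g x ∂Measure.pi (fun _ => ν)
      = ∫ y, ∫ u, g (Fin.cons u y) ∂ν ∂Measure.pi (fun _ => ν) := by
  have e := (measurePreserving_piFinSuccAbove (fun _ : Fin (m + 1) => ν) 0).symm
  rw [← e.integrable_comp_emb (MeasurableEquiv.measurableEmbedding _)] at hg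
  rw [← e.integral_comp']
  exact (integral_prod_symm _ hg).trans
    (by simp [MeasurableEquiv.piFinSuccAbove_symm_apply, Fin.insertNthEquiv])

end Pi

lemma integral_Icc_add_pow (t : ℝ) (k : ℕ) :
    (k + 1) * ∫ u in Set.Icc (0 : ℝ) 1, (u + t) ^ k = (1 + t) ^ (k + 1) - t ^ (k + 1) := by
  rw [integral_Icc_eq_integral_Ioc, ← intervalIntegral.integral_of_le zero_le_one,
    intervalIntegral.integral_comp_add_right (· ^ k), integral_pow, zero_add]
  field_simp

lemma integral_Icc_mul_add_pow (t : ℝ) (k : ℕ) :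
    (k + 1) * ∫ u in Set.Icc (0 : ℝ) 1, u * (u + t) ^ k
      = (1 + t) ^ (k + 1) - ∫ u in Set.Icc (0 : ℝ) 1, (u + t) ^ (k + 1) := by
  have hint : ∀ j : ℕ, IntegrableOn (fun u : ℝ => (u + t) ^ j) (Set.Icc 0 1) := fun j =>
    (by fun_prop : Continuous fun u : ℝ => (u + t) ^ j).integrableOn_Icc
  have hsplit : ∫ u in Set.Icc (0 : ℝ) 1, u * (u + t) ^ k
      = (∫ u in Set.Icc (0 : ℝ) 1, (u + t) ^ (k + 1))
        - t * ∫ u in Set.Icc (0 : ℝ) 1, (u + t) ^ k := by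
    rw [← integral_const_mul, ← integral_sub (hint _) ((hint k).const_mul t)]
    congr with u
    ring
  have hk := integral_Icc_add_pow t (k + 1)
  push_cast at hk
  rw [hsplit, mul_sub, mul_left_comm, integral_Icc_add_pow]
  linear_combination hk

noncomputable abbrev uniformCube (m : ℕ) : Measure (Fin m → ℝ) :=
  Measure.pi fun _ => volume.restrict (Set.Icc 0 1)

instance : IsProbabilityMeasure (volume.restrict (Set.Icc (0 : ℝ) 1)) := ⟨by simp⟩

noncomputable def uniformSumMoment (m k : ℕ) : ℝ := ∫ x, (∑ i, x i) ^ k ∂uniformCube m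

lemma Continuous.integrable_uniformCube {m : ℕ} {f : (Fin m → ℝ) → ℝ} (hf : Continuous f) :
    Integrable f (uniformCube m) := by
  rw [uniformCube, ← Measure.restrict_pi_pi, ← volume_pi]
  exact hf.continuousOn.integrableOn_compact (isCompact_univ_pi fun _ => isCompact_Icc)

lemma integral_uniformCube_succ {m : ℕ} (F : ℝ → ℝ → ℝ) (hF : Continuous F.uncurry) :
    ∫ x, F (x 0) (∑ j, x (Fin.succ j)) ∂uniformCube (m + 1)
      = ∫ y, (∫ u in Set.Icc (0 : ℝ) 1, F u (∑ j, y j)) ∂uniformCube m := by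
  rw [integral_pi_fin_succ _ (by fun_prop : Continuous _).integrable_uniformCube]
  simp

lemma integrable_integral_uniformCube {m : ℕ} (F : ℝ → ℝ → ℝ) (hF : Continuous F.uncurry) :
    Integrable (fun y : Fin m → ℝ => ∫ u in Set.Icc (0 : ℝ) 1, F u (∑ j, y j)) (uniformCube m) :=
  (continuous_parametric_integral_of_continuous
    (f := fun (y : Fin m → ℝ) (u : ℝ) => F u (∑ j, y j)) (by fun_prop)
    isCompact_Icc).integrable_uniformCube

lemma succ_mul_uniformSumMoment_succ (m k : ℕ) :
    (k + 1) * uniformSumMoment (m + 1) k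
      = ∫ y, (1 + ∑ i, y i) ^ (k + 1) ∂uniformCube m - uniformSumMoment m (k + 1) := by
  rw [uniformSumMoment, uniformSumMoment, ← integral_sub
    (Continuous.integrable_uniformCube (by fun_prop))
    (Continuous.integrable_uniformCube (by fun_prop))]
  simp_rw [Fin.sum_univ_succ]
  rw [integral_uniformCube_succ (fun u s => (u + s) ^ k) (by fun_prop), ← integral_const_mul]
  simp_rw [integral_Icc_add_pow]

lemma succ_mul_integral_coord_mul_sum_pow (m k : ℕ) :
    (k + 1) * ∫ x, x 0 * (∑ i, x i) ^ k ∂uniformCube (m + 1)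
      = ∫ y, (1 + ∑ i, y i) ^ (k + 1) ∂uniformCube m - uniformSumMoment (m + 1) (k + 1) := by
  simp_rw [uniformSumMoment, Fin.sum_univ_succ]
  rw [integral_uniformCube_succ (fun u s => u * (u + s) ^ k) (by fun_prop),
    integral_uniformCube_succ (fun u s => (u + s) ^ (k + 1)) (by fun_prop),
    ← integral_const_mul, ← integral_sub (Continuous.integrable_uniformCube (by fun_prop))
    (integrable_integral_uniformCube (fun u s => (u + s) ^ (k + 1)) (by fun_prop))]
  simp_rw [integral_Icc_mul_add_pow]

lemma uniformSumMoment_succ_succ (m k : ℕ) :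
    uniformSumMoment (m + 1) (k + 1)
      = (m + 1) * ∫ x, x 0 * (∑ i, x i) ^ k ∂uniformCube (m + 1) := by
  have hcoord (j : Fin (m + 1)) :
      ∫ x, x j * (∑ i, x i) ^ k ∂uniformCube (m + 1)
        = ∫ x, x 0 * (∑ i, x i) ^ k ∂uniformCube (m + 1) := by
    rw [← integral_pi_comp_perm _ (Equiv.swap 0 j)]
    simp [Equiv.sum_comp]
  rw [uniformSumMoment]
  simp_rw [pow_succ', Finset.sum_mul]
  rw [integral_finsetSum _ fun j _ => Continuous.integrable_uniformCube (by fun_prop)]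
  simp [hcoord]

lemma uniformSumMoment_recurrence (m k : ℕ) :
    (m + k + 2) * uniformSumMoment (m + 1) (k + 1)
      = (m + 1) * (uniformSumMoment m (k + 1) + (k + 1) * uniformSumMoment (m + 1) k) := by
  linear_combination (m + 1) * succ_mul_integral_coord_mul_sum_pow m k
    + (k + 1) * uniformSumMoment_succ_succ m k - (m + 1) * succ_mul_uniformSumMoment_succ m k

lemma stirlingSecond_add_eq_choose_mul_uniformSumMoment (m k : ℕ) :
    (Nat.stirlingSecond (m + k) m : ℝ) = (m + k).choose m * uniformSumMoment m k := by
  induction m generalizing k with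
  | zero => cases k <;> simp [uniformSumMoment]
  | succ m ihm =>
    induction k with
    | zero => simp [uniformSumMoment, Nat.stirlingSecond_self]
    | succ k ihk =>
      have hS : Nat.stirlingSecond (m + k + 2) (m + 1)
          = (m + 1) * Nat.stirlingSecond (m + k + 1) (m + 1) + Nat.stirlingSecond (m + k + 1) m :=
        Nat.stirlingSecond_succ_succ _ _
      have hc₀ : ((m + k + 2 : ℕ) : ℝ) * (m + k + 1).choose m
          = (m + k + 2).choose (m + 1) * (m + 1) := by
        exact_mod_cast Nat.add_one_mul_choose_eq _ _
      have hc₁ : ((m + k + 1).choose (m + 1) : ℝ) * (m + k + 2 : ℕ)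
          = (m + k + 2).choose (m + 1) * (k + 1) := by
        rw [← Nat.cast_mul, Nat.choose_mul_succ_eq, show m + k + 1 + 1 - (m + 1) = k + 1 by omega]
        push_cast; ring
      rw [show m + 1 + k = m + k + 1 by omega] at ihk
      have ihm' := ihm (k + 1)
      rw [show m + (k + 1) = m + k + 1 by omega] at ihm'
      rw [show m + 1 + (k + 1) = m + k + 2 by omega, hS]
      have hpos : (m + k + 2 : ℝ) ≠ 0 := by positivity
      refine mul_left_cancel₀ hpos ?_
      push_cast [ihk, ihm'] at hc₀ hc₁ ⊢
      linear_combination (m + 1) * uniformSumMoment (m + 1) k * hc₁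
        + uniformSumMoment m (k + 1) * hc₀
        - ((m + k + 2).choose (m + 1) : ℝ) * uniformSumMoment_recurrence m k

lemma uniformSumMoment_eq_stirlingSnd_div_choose (m k : ℕ) :
    uniformSumMoment m k = (stirlingSnd (m + k) m : ℝ) / ((m + k).choose m : ℝ) := by
  rw [stirlingSnd_eq_stirlingSecond, stirlingSecond_add_eq_choose_mul_uniformSumMoment,
    mul_div_cancel_left₀ _ (Nat.cast_ne_zero.2 (Nat.choose_pos (by omega)).ne')]

lemma integral_fallFac_sum_uniformCube (m n : ℕ) :
    ∫ x, fallFac (∑ i, x i) n ∂uniformCube m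
      = ∑ k ∈ range (n + 1), stirlingFst n k * uniformSumMoment m k := by
  simp_rw [fallFac_eq_sum_stirlingFst, uniformSumMoment, ← integral_const_mul]
  exact integral_finsetSum _ fun k _ => Continuous.integrable_uniformCube (by fun_prop)

lemma map_eq_uniformCube {Ω : Type*} [MeasurableSpace Ω] {μ : Measure Ω} [IsProbabilityMeasure μ]
    {m : ℕ} {U : Fin m → Ω → ℝ} (hmeas : ∀ i, Measurable (U i))
    (hindep : ProbabilityTheory.iIndepFun U μ)
    (hunif : ∀ i, μ.map (U i) = volume.restrict (Set.Icc (0 : ℝ) 1)) :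
    μ.map (fun ω i => U i ω) = uniformCube m := by
  rw [(ProbabilityTheory.iIndepFun_iff_map_fun_eq_pi_map fun i => (hmeas i).aemeasurable).1 hindep]
  simp_rw [hunif]

theorem factorial_moment_sum_uniform_general
    {Ω : Type*} [MeasurableSpace Ω] (μ : Measure Ω) [IsProbabilityMeasure μ]
    (m : ℕ) (n : ℕ) (U : Fin m → Ω → ℝ) (hmeas : ∀ i, Measurable (U i))
    (hindep : ProbabilityTheory.iIndepFun U μ)
    (hunif : ∀ i, Measure.map (U i) μ = volume.restrict (Set.Icc (0:ℝ) 1)) :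
    ∫ ω, fallFac (∑ i, U i ω) n ∂μ =
      ∑ k ∈ Finset.range (n + 1),
        stirlingFst n k * (stirlingSnd (m + k) m : ℝ) / ((m + k).choose m : ℝ) := by
  calc ∫ ω, fallFac (∑ i, U i ω) n ∂μ = ∫ x, fallFac (∑ i, x i) n ∂uniformCube m := by
        rw [← map_eq_uniformCube hmeas hindep hunif,
          integral_map (by fun_prop)
            (Continuous.aestronglyMeasurable (by unfold fallFac; fun_prop))]
    _ = _ := by
        simp_rw [integral_fallFac_sum_uniformCube, uniformSumMoment_eq_stirlingSnd_div_choose,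
          mul_div_assoc]

theorem factorial_moment_sum_uniform
    {Ω : Type*} [MeasurableSpace Ω] (μ : Measure Ω) [IsProbabilityMeasure μ]
    (m : ℕ) (hm : 1 ≤ m) (n : ℕ) (U : Fin m → Ω → ℝ) (hmeas : ∀ i, Measurable (U i))
    (hindep : ProbabilityTheory.iIndepFun U μ)
    (hunif : ∀ i, Measure.map (U i) μ = volume.restrict (Set.Icc (0:ℝ) 1)) :
    ∫ ω, fallFac (∑ i, U i ω) n ∂μ =
      ∑ k ∈ Finset.range (n + 1),
        stirlingFst n k * (stirlingSnd (m + k) m : ℝ) / ((m + k).choose m : ℝ) :=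
  factorial_moment_sum_uniform_general μ m n U hmeas hindep hunif
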